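/- Let A and H be hearts of two bounded t-structures on a triangulated category T, and let a ≤ b be integers. Write H ∈ [a,b]_A to mean every object of H has A-cohomology concentrated in degrees [a,b]. Then H ∈ [a,b]_A if and only if A ∈ [-b,-a]_H. -/

import Mathlib

/-!
For a bounded t-structure, `x ∈ [a,b]_t` just says `t.IsGE x a ∧ t.IsLE x b`. Moreover `t.IsGE x a`
holds as soon as `x` receives no nonzero map from a shifted heart object `W ∈ heart⟦-d⟧` with
`d < a`, since every bounded object of `t.le (a - 1)` is an iterated extension of such objects;
dually for `t.IsLE x b`. If `H ∈ [a,b]_A`, then `W ∈ H⟦-d⟧` lies in `[a+d, b+d]_A`, so for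
`x ∈ A` the group `Hom(W, x)` vanishes when `d < -b` and `Hom(x, W)` vanishes when `d > -a`:
this is `x ∈ [-b,-a]_H`. The converse is the same argument with the roles of `A` and `H` exchanged.
-/

open CategoryTheory Limits Pretriangulated Triangulated

namespace TSt

variable {C : Type*} [Category C] [Preadditive C] [HasZeroObject C] [HasShift C ℤ]
  [∀ (n : ℤ), (shiftFunctor C n).Additive] [Pretriangulated C]

/-- The truncation `τ_{≤ n} A` with respect to a t-structure, defined (up to isomorphism)
by the triangle `τ_{≤n} A → A → τ_{≥ n+1} A → `. -/
noncomputable def truncLEObj (t : TStructure C) (n : ℤ) (A : C) : C :=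
  (t.exists_triangle A n (n + 1) rfl).choose

/-- The truncation `τ_{≥ n} A` with respect to a t-structure. -/
noncomputable def truncGEObj (t : TStructure C) (n : ℤ) (A : C) : C :=
  (t.exists_triangle A (n - 1) n (by omega)).choose_spec.choose

/-- The `n`-th cohomology object of `A` with respect to the t-structure `t`:
`H^n(A) = (τ_{≥ n} τ_{≤ n} A)⟦n⟧`, an object of the heart. -/
noncomputable def cohObj (t : TStructure C) (n : ℤ) (A : C) : C :=
  (truncGEObj t n (truncLEObj t n A))⟦n⟧

/-- Membership in the heart of a t-structure. -/
def InHeart (t : TStructure C) (A : C) : Prop := t.le 0 A ∧ t.ge 0 A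

/-- A t-structure is bounded if every object is bounded above and below for it. -/
def IsBoundedTStructure (t : TStructure C) : Prop :=
  ∀ X : C, ∃ a b : ℤ, t.ge a X ∧ t.le b X

/-- `x ∈ [a,b]_t` : the cohomology of `x` with respect to `t` vanishes outside `[a,b]`. -/
def MemIcc (t : TStructure C) (a b : ℤ) (x : C) : Prop :=
  ∀ i : ℤ, (i < a ∨ b < i) → IsZero (cohObj t i x)

/-- `x ∈ [[a,b]]_t` : cohomology concentrated in `[a,b]`, nonzero at both endpoints. -/
def MemIccStrict (t : TStructure C) (a b : ℤ) (x : C) : Prop :=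
  MemIcc t a b x ∧ ¬ IsZero (cohObj t a x) ∧ ¬ IsZero (cohObj t b x)

end TSt

section

-- qualified because `Triangle.shiftFunctor` shadows it in the `Triangle.*` lemmas below
variable {C : Type*} [Category C] [Preadditive C] [HasZeroObject C] [HasShift C ℤ]
  [∀ (n : ℤ), (CategoryTheory.shiftFunctor C n).Additive] [Pretriangulated C]

namespace CategoryTheory.Pretriangulated

lemma Triangle.hom_from_obj₂_eq_zero {T : Triangle C} (hT : T ∈ distTriang C) {X : C}
    (h₁ : ∀ f : T.obj₁ ⟶ X, f = 0) (h₃ : ∀ f : T.obj₃ ⟶ X, f = 0) (f : T.obj₂ ⟶ X) : f = 0 := by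
  obtain ⟨g, rfl⟩ := Triangle.yoneda_exact₂ _ hT f (h₁ _)
  rw [h₃ g, comp_zero]

lemma Triangle.hom_to_obj₂_eq_zero {T : Triangle C} (hT : T ∈ distTriang C) {X : C}
    (h₁ : ∀ f : X ⟶ T.obj₁, f = 0) (h₃ : ∀ f : X ⟶ T.obj₃, f = 0) (f : X ⟶ T.obj₂) : f = 0 := by
  obtain ⟨g, rfl⟩ := Triangle.coyoneda_exact₂ _ hT f (h₃ _)
  rw [h₁ g, zero_comp]

end CategoryTheory.Pretriangulated

namespace CategoryTheory.Triangulated.TStructure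

variable (t : TStructure C)

lemma isLE₃ {T : Triangle C} (hT : T ∈ distTriang C) (n : ℤ) (h₁ : t.IsLE T.obj₁ (n + 1))
    (h₂ : t.IsLE T.obj₂ n) : t.IsLE T.obj₃ n :=
  t.isLE₂ _ (rot_of_distTriang _ hT) n h₂ (t.isLE_shift T.obj₁ (n + 1) 1 n)

lemma isGE₁ {T : Triangle C} (hT : T ∈ distTriang C) (n : ℤ) (h₂ : t.IsGE T.obj₂ n)
    (h₃ : t.IsGE T.obj₃ (n - 1)) : t.IsGE T.obj₁ n :=
  t.isGE₂ _ (inv_rot_of_distTriang _ hT) n (t.isGE_shift T.obj₃ (n - 1) (-1) n) h₂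

lemma prop_of_isGE_of_isLE (P : C → Prop)
    (hP : ∀ T ∈ distTriang C, P T.obj₁ → P T.obj₃ → P T.obj₂) {c n : ℤ} (hcn : c ≤ n)
    (hheart : ∀ (W : C) (d : ℤ), c ≤ d → d ≤ n → t.IsLE W d → t.IsGE W d → P W)
    (W : C) [hc : t.IsGE W c] [hn : t.IsLE W n] : P W := by
  induction n, hcn using Int.leInduction generalizing W with
  | base => exact hheart W c le_rfl le_rfl hn hc
  | succ n hcn ih =>
    obtain ⟨X, Y, hX, hY, f, g, h, hT⟩ := t.exists_triangle W n (n + 1) rfl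
    have hXn : t.IsLE X n := ⟨hX⟩
    have hYn : t.IsGE Y (n + 1) := ⟨hY⟩
    have : t.IsGE X c := t.isGE₁ hT c hc (t.isGE_of_ge Y (c - 1) (n + 1))
    have hYn' : t.IsLE Y (n + 1) := t.isLE₃ hT (n + 1) (t.isLE_of_le X n (n + 1 + 1)) hn
    exact hP _ hT (ih (fun W d hcd hdn => hheart W d hcd (by omega)) X)
      (hheart Y (n + 1) (by omega) le_rfl hYn' hYn)

end CategoryTheory.Triangulated.TStructure

end

namespace TSt

variable {C : Type*} [Category C] [Preadditive C] [HasZeroObject C] [HasShift C ℤ]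
  [∀ (n : ℤ), (shiftFunctor C n).Additive] [Pretriangulated C]

section

variable (t : TStructure C)

lemma exists_truncLEObj_triangle (n : ℤ) (A : C) :
    ∃ (Y : C) (f : truncLEObj t n A ⟶ A) (g : A ⟶ Y) (h : Y ⟶ (truncLEObj t n A)⟦(1 : ℤ)⟧),
      Triangle.mk f g h ∈ distTriang C ∧ t.IsLE (truncLEObj t n A) n ∧ t.IsGE Y (n + 1) := by
  obtain ⟨Y, hX, hY, f, g, h, hT⟩ := (t.exists_triangle A n (n + 1) rfl).choose_spec
  exact ⟨Y, f, g, h, hT, ⟨hX⟩, ⟨hY⟩⟩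

lemma exists_truncGEObj_triangle (n : ℤ) (A : C) :
    ∃ (X : C) (f : X ⟶ A) (g : A ⟶ truncGEObj t n A) (h : truncGEObj t n A ⟶ X⟦(1 : ℤ)⟧),
      Triangle.mk f g h ∈ distTriang C ∧ t.IsLE X (n - 1) ∧ t.IsGE (truncGEObj t n A) n := by
  obtain ⟨hX, hY, f, g, h, hT⟩ :=
    (t.exists_triangle A (n - 1) n (by omega)).choose_spec.choose_spec
  exact ⟨_, f, g, h, hT, ⟨hX⟩, ⟨hY⟩⟩

lemma isZero_truncLEObj_iff (n : ℤ) (A : C) :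
    IsZero (truncLEObj t n A) ↔ t.IsGE A (n + 1) := by
  obtain ⟨Y, f, g, h, hT, _, _⟩ := exists_truncLEObj_triangle t n A
  constructor
  · intro hX
    have : IsIso g := (Triangle.isZero₁_iff_isIso₂ _ hT).1 hX
    exact t.isGE_of_iso (asIso g).symm (n + 1)
  · intro hA
    have : t.IsGE (truncLEObj t n A) (n + 1) :=
      t.isGE₁ hT (n + 1) hA (t.isGE_of_ge Y (n + 1 - 1) (n + 1))
    exact t.isZero _ n (n + 1)

lemma isZero_truncGEObj_iff (n : ℤ) (A : C) :
    IsZero (truncGEObj t n A) ↔ t.IsLE A (n - 1) := by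
  obtain ⟨X, f, g, h, hT, _, _⟩ := exists_truncGEObj_triangle t n A
  constructor
  · intro hY
    have : IsIso f := (Triangle.isZero₃_iff_isIso₁ _ hT).1 hY
    exact t.isLE_of_iso (asIso f) (n - 1)
  · intro hA
    have : t.IsLE (truncGEObj t n A) (n - 1) :=
      t.isLE₃ hT (n - 1) (t.isLE_of_le X (n - 1) (n - 1 + 1)) hA
    exact t.isZero _ (n - 1) n

lemma isGE_truncLEObj {n c : ℤ} (hc : c ≤ n + 2) (A : C) [hA : t.IsGE A c] :
    t.IsGE (truncLEObj t n A) c := by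
  obtain ⟨Y, f, g, h, hT, -, _⟩ := exists_truncLEObj_triangle t n A
  exact t.isGE₁ hT c hA (t.isGE_of_ge Y (c - 1) (n + 1))

lemma nonempty_truncLEObj_iso (n : ℤ) (A : C) [hA : t.IsLE A n] :
    Nonempty (truncLEObj t n A ≅ A) := by
  obtain ⟨Y, f, g, h, hT, _, _⟩ := exists_truncLEObj_triangle t n A
  have : t.IsLE Y n := t.isLE₃ hT n (t.isLE_of_le (truncLEObj t n A) n (n + 1)) hA
  have : IsIso f := (Triangle.isZero₃_iff_isIso₁ _ hT).1 (t.isZero Y n (n + 1))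
  exact ⟨asIso f⟩

lemma isZero_cohObj_iff (n : ℤ) (A : C) :
    IsZero (cohObj t n A) ↔ t.IsLE (truncLEObj t n A) (n - 1) := by
  rw [cohObj, ← isZero_truncGEObj_iff]
  exact ⟨IsZero.of_full_of_faithful_of_isZero (shiftFunctor C n) _, (shiftFunctor C n).map_isZero⟩

lemma isZero_cohObj_of_isGE (n : ℤ) (A : C) [t.IsGE A (n + 1)] : IsZero (cohObj t n A) := by
  rw [isZero_cohObj_iff]
  exact t.isLE_of_isZero ((isZero_truncLEObj_iff t n A).2 inferInstance) _

lemma isZero_cohObj_of_isLE (n : ℤ) (A : C) [t.IsLE A (n - 1)] : IsZero (cohObj t n A) := by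
  have := t.isLE_of_le A (n - 1) n
  obtain ⟨e⟩ := nonempty_truncLEObj_iso t n A
  rw [isZero_cohObj_iff]
  exact t.isLE_of_iso e.symm _

lemma isGE_succ_of_isZero_cohObj (n : ℤ) (A : C) [t.IsGE A n] (h : IsZero (cohObj t n A)) :
    t.IsGE A (n + 1) := by
  rw [isZero_cohObj_iff] at h
  have := isGE_truncLEObj t (n := n) (c := n) (by omega) A
  exact (isZero_truncLEObj_iff t n A).1 (t.isZero _ (n - 1) n)

lemma isLE_pred_of_isZero_cohObj (n : ℤ) (A : C) [t.IsLE A n] (h : IsZero (cohObj t n A)) :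
    t.IsLE A (n - 1) := by
  rw [isZero_cohObj_iff] at h
  obtain ⟨e⟩ := nonempty_truncLEObj_iso t n A
  exact t.isLE_of_iso e (n - 1)

lemma isGE_of_isZero_cohObj {c a : ℤ} (hca : c ≤ a) (A : C) [t.IsGE A c]
    (h : ∀ i, c ≤ i → i < a → IsZero (cohObj t i A)) : t.IsGE A a := by
  induction a, hca using Int.leInduction with
  | base => infer_instance
  | succ k hck ih =>
    have := ih fun i hci hik => h i hci (by omega)
    exact isGE_succ_of_isZero_cohObj t k A (h k hck (by omega))

lemma isLE_of_isZero_cohObj {b d : ℤ} (hbd : b ≤ d) (A : C) [t.IsLE A d]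
    (h : ∀ i, b < i → i ≤ d → IsZero (cohObj t i A)) : t.IsLE A b := by
  induction b, hbd using Int.leInductionDown with
  | base => infer_instance
  | pred k hkd ih =>
    have := ih fun i hki hid => h i (by omega) hid
    exact isLE_pred_of_isZero_cohObj t k A (h k (by omega) hkd)

lemma memIcc_iff (ht : IsBoundedTStructure t) (a b : ℤ) (A : C) :
    MemIcc t a b A ↔ t.IsGE A a ∧ t.IsLE A b := by
  constructor
  · intro h
    obtain ⟨c, d, hc, hd⟩ := ht A
    have : t.IsGE A c := ⟨hc⟩
    have : t.IsLE A d := ⟨hd⟩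
    have : t.IsGE A (min c a) := t.isGE_of_ge A _ c (min_le_left c a)
    have : t.IsLE A (max d b) := t.isLE_of_le A d _ (le_max_left d b)
    exact ⟨isGE_of_isZero_cohObj t (min_le_right c a) A fun i _ hi => h i (.inl hi),
      isLE_of_isZero_cohObj t (le_max_right d b) A fun i hi _ => h i (.inr hi)⟩
  · rintro ⟨_, _⟩ i (hi | hi)
    · have := t.isGE_of_ge A (i + 1) a
      exact isZero_cohObj_of_isGE t i A
    · have := t.isLE_of_le A b (i - 1)
      exact isZero_cohObj_of_isLE t i A

lemma isGE_of_forall_hom_eq_zero (ht : IsBoundedTStructure t) (x : C) (a : ℤ)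
    (H : ∀ (W : C) (d : ℤ), d < a → t.IsLE W d → t.IsGE W d → ∀ f : W ⟶ x, f = 0) :
    t.IsGE x a := by
  rw [t.isGE_iff_orthogonal (a - 1) a (by omega)]
  intro W f hW
  obtain ⟨c, -, hc, -⟩ := ht W
  have : t.IsGE W c := ⟨hc⟩
  have : t.IsGE W (min c (a - 1)) := t.isGE_of_ge W _ c (min_le_left c (a - 1))
  exact t.prop_of_isGE_of_isLE (fun W => ∀ f : W ⟶ x, f = 0)
    (fun T hT => Triangle.hom_from_obj₂_eq_zero hT) (min_le_right c (a - 1))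
    (fun W d _ hd => H W d (by omega)) W f

lemma isLE_of_forall_hom_eq_zero (ht : IsBoundedTStructure t) (x : C) (b : ℤ)
    (H : ∀ (W : C) (d : ℤ), b < d → t.IsLE W d → t.IsGE W d → ∀ f : x ⟶ W, f = 0) :
    t.IsLE x b := by
  rw [t.isLE_iff_orthogonal b (b + 1) rfl]
  intro W f hW
  obtain ⟨-, d, -, hd⟩ := ht W
  have : t.IsLE W d := ⟨hd⟩
  have : t.IsLE W (max d (b + 1)) := t.isLE_of_le W d _ (le_max_left d (b + 1))
  exact t.prop_of_isGE_of_isLE (fun W => ∀ f : x ⟶ W, f = 0)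
    (fun T hT => Triangle.hom_to_obj₂_eq_zero hT) (le_max_right d (b + 1))
    (fun W d hd _ => H W d (by omega)) W f

end

lemma isGE_isLE_of_forall_inHeart (t₁ t₂ : TStructure C) (ht₂ : IsBoundedTStructure t₂)
    {a b : ℤ} (h : ∀ y, InHeart t₂ y → t₁.IsGE y a ∧ t₁.IsLE y b) (x : C) (hx : InHeart t₁ x) :
    t₂.IsGE x (-b) ∧ t₂.IsLE x (-a) := by
  have hshift (W : C) (d : ℤ) (hle : t₂.IsLE W d) (hge : t₂.IsGE W d) :
      t₁.IsGE W (a + d) ∧ t₁.IsLE W (b + d) := by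
    obtain ⟨_, _⟩ := h (W⟦d⟧) ⟨(t₂.isLE_shift W d d 0).le, (t₂.isGE_shift W d d 0).ge⟩
    exact ⟨t₁.isGE_of_shift W (a + d) d a, t₁.isLE_of_shift W (b + d) d b⟩
  have : t₁.IsLE x 0 := ⟨hx.1⟩
  have : t₁.IsGE x 0 := ⟨hx.2⟩
  constructor
  · refine isGE_of_forall_hom_eq_zero t₂ ht₂ x (-b) fun W d hd hle hge f => ?_
    have := (hshift W d hle hge).2
    exact t₁.zero f (b + d) 0
  · refine isLE_of_forall_hom_eq_zero t₂ ht₂ x (-a) fun W d hd hle hge f => ?_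
    have := (hshift W d hle hge).1
    exact t₁.zero f 0 (a + d)

theorem heart_memIcc_symm_general
    (t₁ t₂ : TStructure C) (ht₁ : IsBoundedTStructure t₁) (ht₂ : IsBoundedTStructure t₂)
    (a b : ℤ) :
    (∀ x : C, InHeart t₂ x → MemIcc t₁ a b x) ↔
    (∀ x : C, InHeart t₁ x → MemIcc t₂ (-b) (-a) x) := by
  simp only [memIcc_iff t₁ ht₁, memIcc_iff t₂ ht₂]
  refine ⟨isGE_isLE_of_forall_inHeart t₁ t₂ ht₂, fun h => ?_⟩
  simpa only [neg_neg] using isGE_isLE_of_forall_inHeart t₂ t₁ ht₁ h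

/-- For hearts `A` (of `t₁`) and `H` (of `t₂`) of bounded t-structures
and integers `a ≤ b`: `H ∈ [a,b]_A` if and only if `A ∈ [-b,-a]_H`. -/
theorem heart_memIcc_symm
    (t₁ t₂ : TStructure C) (ht₁ : IsBoundedTStructure t₁) (ht₂ : IsBoundedTStructure t₂)
    (a b : ℤ) (hab : a ≤ b) :
    (∀ x : C, InHeart t₂ x → MemIcc t₁ a b x) ↔
    (∀ x : C, InHeart t₁ x → MemIcc t₂ (-b) (-a) x) :=
  heart_memIcc_symm_general t₁ t₂ ht₁ ht₂ a b

end TSt
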